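/- arXiv:2006.05953 — 3 statements merged into one kernel-verified Lean document; each statement's English description precedes it below -/
import Mathlib

section
/- Let $X \subset \mathbb{R}^d$ be finite, $U(x) = \ell(\{z \in X : z \leq x\})$, and let $x_0 \in \mathbb{R}^d$ and $m \geq 1$ an integer with $U(x_0) \geq m$. Define $A = \{x \leq x_0 : U(x_0) - U(x) \leq m\}$. Then $\ell(X \cap A) \geq m$. -/
open scoped Classical

/-- The length of a longest chain (totally ordered subset, with respect to the
coordinatewise partial order on `ℝ^d`) of a finite set `A`. -/
noncomputable def chainLen {d : ℕ} (A : Finset (Fin d → ℝ)) : ℕ :=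
  (A.powerset.filter fun C : Finset (Fin d → ℝ) =>
    IsChain (· ≤ ·) (↑C : Set (Fin d → ℝ))).sup Finset.card

/-- The Pareto-depth function: the length of a longest chain among the points of
`X` dominated by `x` in the coordinatewise partial order. -/
noncomputable def depth {d : ℕ} (X : Finset (Fin d → ℝ)) (x : Fin d → ℝ) : ℕ :=
  chainLen (X.filter fun z => z ≤ x)

lemma card_le_chainLen {d : ℕ} {A C : Finset (Fin d → ℝ)} (hCA : C ⊆ A)
    (hC : IsChain (· ≤ ·) (↑C : Set (Fin d → ℝ))) : C.card ≤ chainLen A :=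
  Finset.le_sup (by simp [Finset.mem_filter, Finset.mem_powerset, hCA, hC])

lemma exists_max_chain {d : ℕ} (A : Finset (Fin d → ℝ)) :
    ∃ C, C ⊆ A ∧ IsChain (· ≤ ·) (↑C : Set (Fin d → ℝ)) ∧ C.card = chainLen A := by
  have hne : (A.powerset.filter fun C : Finset (Fin d → ℝ) =>
      IsChain (· ≤ ·) (↑C : Set (Fin d → ℝ))).Nonempty := by
    refine ⟨∅, ?_⟩
    simp [Finset.mem_filter, Finset.mem_powerset, Set.subsingleton_empty.isChain]
  obtain ⟨C, hC, hCsup⟩ := Finset.exists_mem_eq_sup _ hne Finset.card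
  simp only [Finset.mem_filter, Finset.mem_powerset] at hC
  exact ⟨C, hC.1, hC.2, hCsup.symm⟩

lemma filter_le_ssubset {d : ℕ} {C : Finset (Fin d → ℝ)} {z w : Fin d → ℝ}
    (hw : w ∈ C) (hzw : z ≤ w) (hne : z ≠ w) :
    C.filter (· ≤ z) ⊂ C.filter (· ≤ w) := by
  refine ⟨Finset.filter_subset_filter _ le_rfl |>.trans ?_, fun hcon => ?_⟩
  · intro c hc
    simp only [Finset.mem_filter] at hc ⊢
    exact ⟨hc.1, hc.2.trans hzw⟩
  · have hwmem : w ∈ C.filter (· ≤ z) := hcon (by simp [Finset.mem_filter, hw])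
    simp only [Finset.mem_filter] at hwmem
    exact hne (le_antisymm hzw hwmem.2)

/-- If `U(x₀) ≥ m` with `m ≥ 1`, then with `A = {x ≤ x₀ : U(x₀) - U(x) ≤ m}` the
longest chain in `X ∩ A` has length at least `m`. -/
theorem chainLen_within_depth_ge (d : ℕ) (X : Finset (Fin d → ℝ))
    (x0 : Fin d → ℝ) (m : ℕ) (hm : 1 ≤ m) (hU : m ≤ depth X x0) :
    m ≤ chainLen (X.filter fun z => z ≤ x0 ∧ depth X x0 - depth X z ≤ m) := by
  set k := depth X x0 with hk
  obtain ⟨C, hCA, hCchain, hCcard⟩ := exists_max_chain (X.filter fun z => z ≤ x0)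
  have hCcard : C.card = k := by rw [hk, depth]; exact hCcard
  set f : (Fin d → ℝ) → ℕ := fun z => (C.filter (· ≤ z)).card with hf
  have hmemC : ∀ z ∈ C, z ∈ X ∧ z ≤ x0 := by
    intro z hz
    simpa [Finset.mem_filter] using hCA hz
  -- f is injective on C
  have hinj : Set.InjOn f (↑C : Set (Fin d → ℝ)) := by
    intro z hz w hw hfzw
    by_contra hne
    rcases hCchain hz hw hne with h | h
    · have := Finset.card_lt_card (filter_le_ssubset hw h hne)
      simp only [hf] at hfzw; omega
    · have := Finset.card_lt_card (filter_le_ssubset hz h (Ne.symm hne))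
      simp only [hf] at hfzw; omega
  -- bounds on f
  have hfmem : ∀ z ∈ C, f z ∈ Finset.Icc 1 k := by
    intro z hz
    have h1 : 1 ≤ f z := Finset.card_pos.mpr ⟨z, by simp [Finset.mem_filter, hz]⟩
    have h2 : f z ≤ k := by
      rw [← hCcard]; exact Finset.card_le_card (Finset.filter_subset _ _)
    exact Finset.mem_Icc.mpr ⟨h1, h2⟩
  -- image of C under f equals Icc 1 k
  have himg : C.image f = Finset.Icc 1 k := by
    apply Finset.eq_of_subset_of_card_le
    · intro i hi
      obtain ⟨z, hz, rfl⟩ := Finset.mem_image.mp hi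
      exact hfmem z hz
    · rw [Finset.card_image_of_injOn hinj, hCcard, Nat.card_Icc]; omega
  -- f z ≤ depth X z for z in C
  have hdep : ∀ z ∈ C, f z ≤ depth X z := by
    intro z hz
    refine card_le_chainLen ?_ (hCchain.mono (fun x hx => (Finset.mem_filter.mp hx).1))
    intro c hc
    simp only [Finset.mem_filter] at hc ⊢
    exact ⟨(hmemC c hc.1).1, hc.2⟩
  -- the top part of the chain
  set D := C.filter (fun z => k - m + 1 ≤ f z) with hD
  have hDcard : D.card = m := by
    have : D.image f = (C.image f).filter (fun i => k - m + 1 ≤ i) :=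
      Finset.filter_image.symm
    have hci : D.card = (D.image f).card :=
      (Finset.card_image_of_injOn (hinj.mono (by
        intro x hx; exact (Finset.filter_subset _ _) hx))).symm
    rw [hci, this, himg]
    have : (Finset.Icc 1 k).filter (fun i => k - m + 1 ≤ i)
        = Finset.Icc (k - m + 1) k := by
      ext i
      simp only [Finset.mem_filter, Finset.mem_Icc]
      omega
    rw [this, Nat.card_Icc]
    omega
  have hDsub : D ⊆ X.filter fun z => z ≤ x0 ∧ depth X x0 - depth X z ≤ m := by
    intro z hz
    simp only [hD, Finset.mem_filter] at hz
    obtain ⟨hzC, hzf⟩ := hz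
    have h1 := hmemC z hzC
    have h2 := hdep z hzC
    simp only [Finset.mem_filter]
    exact ⟨h1.1, h1.2, by rw [← hk]; omega⟩
  have hDchain : IsChain (· ≤ ·) (↑D : Set (Fin d → ℝ)) :=
    hCchain.mono (fun x hx => (Finset.mem_filter.mp hx).1)
  calc m = D.card := hDcard.symm
    _ ≤ _ := card_le_chainLen hDsub hDchain
end

section
/- Let $0 < \delta \leq R \leq 1$ and let $f(x) = (x_1 \cdots x_d)^{1/d}$ on $[0,1]^d$. Define $\Omega_R = \{x \in [0,1]^d : f(x) > R\}$ and $\partial_R\Omega = \{x \in [0,1]^d : f(x) = R\}$. Then there exists a constant $c_d > 0$ depending only on $d$ such that for every $y \in \Omega_{R+\delta}$, $\mathrm{dist}(y, \partial_R\Omega) \geq c_d\, \delta R^{d-1}$. -/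
/-!
For `x` on the level set `∏ xᵢ = R^d` and `y` with `∏ yᵢ > (R + δ)^d`, the gap between the
products is at least `(R + δ)^d - R^d ≥ d R^(d-1) δ`. On the unit cube the product is
`d`-Lipschitz for the Euclidean distance (each factor moves by at most the distance and all
other factors are at most `1`), so `dist y x ≥ δ R^(d-1)`: the theorem holds with `c = 1`.
-/

open Finset

lemma natCast_mul_pow_pred_mul_sub_le_pow_sub_pow {a b : ℝ} (hb : 0 ≤ b) (hab : b ≤ a) (n : ℕ) :
    n * b ^ (n - 1) * (a - b) ≤ a ^ n - b ^ n := by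
  rw [← geom_sum₂_mul]
  refine mul_le_mul_of_nonneg_right ?_ (sub_nonneg.mpr hab)
  have hterm : ∀ i ∈ range n, b ^ (n - 1) ≤ a ^ i * b ^ (n - 1 - i) := fun i hi => by
    rw [← pow_mul_pow_sub b (by have := mem_range.mp hi; omega : i ≤ n - 1)]
    exact mul_le_mul_of_nonneg_right (pow_le_pow_left₀ hb hab i) (pow_nonneg hb _)
  simpa using card_nsmul_le_sum (range n) _ _ hterm

lemma Finset.abs_prod_sub_prod_le_sum_abs_sub {ι : Type*} (s : Finset ι) {x y : ι → ℝ}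
    (hx : ∀ i ∈ s, |x i| ≤ 1) (hy : ∀ i ∈ s, |y i| ≤ 1) :
    |∏ i ∈ s, y i - ∏ i ∈ s, x i| ≤ ∑ i ∈ s, |y i - x i| := by
  classical
  induction s using Finset.induction with
  | empty => simp
  | insert a s ha ih =>
    simp only [mem_insert, forall_eq_or_imp] at hx hy
    have hprod_x : |∏ i ∈ s, x i| ≤ 1 := by
      rw [abs_prod]; exact prod_le_one (fun _ _ => abs_nonneg _) hx.2
    rw [prod_insert ha, prod_insert ha, sum_insert ha]
    calc |y a * ∏ i ∈ s, y i - x a * ∏ i ∈ s, x i|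
        = |y a * (∏ i ∈ s, y i - ∏ i ∈ s, x i) + (y a - x a) * ∏ i ∈ s, x i| := by ring_nf
      _ ≤ |y a| * |∏ i ∈ s, y i - ∏ i ∈ s, x i| + |y a - x a| * |∏ i ∈ s, x i| := by
        rw [← abs_mul, ← abs_mul]; exact abs_add_le _ _
      _ ≤ 1 * ∑ i ∈ s, |y i - x i| + |y a - x a| * 1 := by
        gcongr
        exacts [hy.1, ih hx.2 hy.2]
      _ = |y a - x a| + ∑ i ∈ s, |y i - x i| := by ring

lemma abs_prod_sub_prod_le_card_mul_dist {ι : Type*} [Fintype ι] {x y : EuclideanSpace ℝ ι}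
    (hx : ∀ i, |x i| ≤ 1) (hy : ∀ i, |y i| ≤ 1) :
    |∏ i, y i - ∏ i, x i| ≤ Fintype.card ι * dist y x :=
  calc |∏ i, y i - ∏ i, x i| ≤ ∑ i, |y i - x i| :=
        abs_prod_sub_prod_le_sum_abs_sub _ (fun i _ => hx i) (fun i _ => hy i)
    _ ≤ ∑ _i : ι, dist y x := sum_le_sum fun i _ => PiLp.dist_apply_le y x i
    _ = Fintype.card ι * dist y x := by simp

lemma abs_le_one_of_mem_Icc {t : ℝ} (ht : t ∈ Set.Icc (0 : ℝ) 1) : |t| ≤ 1 :=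
  abs_le.mpr ⟨by linarith [ht.1], ht.2⟩

/-- Distance from `Ω_{R+δ}` to the boundary piece `∂_R Ω`: there is a constant
`c_d > 0` depending only on `d` such that for `0 < δ ≤ R ≤ 1` every point of
`Ω_{R+δ}` is at (Euclidean) distance at least `c_d δ R^{d-1}` from `∂_R Ω`. -/
theorem dist_to_boundary_lower_bound (d : ℕ) (hd : 0 < d) :
    ∃ c : ℝ, 0 < c ∧ ∀ R δ : ℝ, 0 < δ → δ ≤ R → R ≤ 1 →
      ∀ y : EuclideanSpace ℝ (Fin d),
        (∀ i, y i ∈ Set.Icc (0 : ℝ) 1) → (∏ i, y i) ^ ((1 : ℝ) / d) > R + δ →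
        Metric.infDist y {x : EuclideanSpace ℝ (Fin d) |
            (∀ i, x i ∈ Set.Icc (0 : ℝ) 1) ∧ (∏ i, x i) ^ ((1 : ℝ) / d) = R}
          ≥ c * δ * R ^ (d - 1) := by
  refine ⟨1, one_pos, fun R δ hδ hδR hR1 y hy hfy => ?_⟩
  have hR : 0 < R := hδ.trans_le hδR
  have hd' : (0 : ℝ) < d := Nat.cast_pos.mpr hd
  have hprod_nonneg {x : EuclideanSpace ℝ (Fin d)} (hx : ∀ i, x i ∈ Set.Icc (0 : ℝ) 1) :
      0 ≤ ∏ i, x i := prod_nonneg fun i _ => (hx i).1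
  have hprod_y : (R + δ) ^ d < ∏ i, y i := by
    rwa [gt_iff_lt, one_div, Real.lt_rpow_inv_iff_of_pos (by linarith) (hprod_nonneg hy) hd',
      Real.rpow_natCast] at hfy
  rw [one_mul, ge_iff_le]
  refine (Metric.le_infDist ?diagonal_mem).2 fun x ⟨hx, hfx⟩ => ?_
  case diagonal_mem =>
    refine ⟨WithLp.toLp 2 fun _ => R, fun _ => ⟨hR.le, hR1⟩, ?_⟩
    simp [← Real.rpow_natCast, ← Real.rpow_mul hR.le, hd'.ne']
  rw [one_div, Real.rpow_inv_eq (hprod_nonneg hx) hR.le hd'.ne', Real.rpow_natCast] at hfx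
  have hlip := abs_prod_sub_prod_le_card_mul_dist (fun i => abs_le_one_of_mem_Icc (hx i))
    (fun i => abs_le_one_of_mem_Icc (hy i))
  rw [Fintype.card_fin, hfx] at hlip
  refine le_of_mul_le_mul_left ?_ hd'
  calc (d : ℝ) * (δ * R ^ (d - 1)) = d * R ^ (d - 1) * (R + δ - R) := by ring
    _ ≤ (R + δ) ^ d - R ^ d :=
      natCast_mul_pow_pred_mul_sub_le_pow_sub_pow hR.le (le_add_of_nonneg_right hδ.le) d
    _ ≤ |∏ i, y i - R ^ d| := by linarith [le_abs_self (∏ i, y i - R ^ d)]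
    _ ≤ d * dist y x := hlip
end

section
/- Fix $a > 0$, $p \in \mathbb{R}^d$, $x_0 \in \mathbb{R}^d$ with all coordinates positive, and define on $\{x : x_i > 0\ \forall i\}$ the functions $w(x) = a^{1/d} d (x_1\cdots x_d)^{1/d} - a^{1/d} d$ and $v(x) = \tfrac{1}{2} a^{-(d-1)/d}\big( (p\cdot x)\big((x_1\cdots x_d)^{1/d} - (x_1\cdots x_d)^{-1/d}\big) - 2 (p\cdot x_0)\big((x_1\cdots x_d)^{1/d} - 1\big) \big)$. Then $\sum_{i=1}^d \Big( \prod_{j \neq i} \partial_{x_j} w(x) \Big) \partial_{x_i} v(x) = p \cdot (x - x_0)$ for all such $x$. -/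
/-!
Write `g = (∏ yᵢ)^{1/d}`. Then `∂ⱼ w = a^{1/d} g / xⱼ`, so `∏ⱼ ∂ⱼ w = a` (the explicit
solution of the homogeneous equation), whence `∏_{j ≠ i} ∂ⱼ w = a xᵢ / (a^{1/d} g)`. The
left-hand side is therefore `a / (a^{1/d} g)` times the radial derivative `x ⋅ ∇v`, and since
`g` is homogeneous of degree one and `p ⋅ y` is linear,
`x ⋅ ∇v = a^{-(d-1)/d} g (p ⋅ x - p ⋅ x₀)`.
-/

open Finset ContinuousLinearMap

variable {ι : Type*} [Fintype ι]

theorem ContinuousLinearMap.sum_mul_apply_single [DecidableEq ι] (L : (ι → ℝ) →L[ℝ] ℝ)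
    (x : ι → ℝ) : ∑ i, x i * L (Pi.single i 1) = L x := by
  conv_rhs => rw [← univ_sum_single x, map_sum]
  refine sum_congr rfl fun i _ => ?_
  rw [← smul_eq_mul, ← map_smul, ← Pi.single_smul', smul_eq_mul, mul_one]

theorem Real.rpow_neg_sub_one_div {a : ℝ} (ha : 0 < a) {n : ℕ} (hn : n ≠ 0) :
    a ^ (-((n : ℝ) - 1) / n) = a ^ ((1 : ℝ) / n) / a := by
  rw [← Real.rpow_sub_one ha.ne']
  congr 1
  field_simp
  ring

theorem hasFDerivAt_prod_rpow {x : ι → ℝ} (hx : ∀ i, 0 < x i) (r : ℝ) :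
    HasFDerivAt (fun y : ι → ℝ => (∏ i, y i) ^ r)
      ((r * (∏ i, x i) ^ r) • ∑ i, (x i)⁻¹ • proj (R := ℝ) (φ := fun _ : ι => ℝ) i) x := by
  classical
  have hP : 0 < ∏ i, x i := prod_pos fun i _ => hx i
  have hprod : HasFDerivAt (fun y : ι → ℝ => ∏ i, y i) _ x :=
    hasFDerivAt_finsetProd (𝕜 := ℝ)
  refine ((Real.hasDerivAt_rpow_const (p := r) (Or.inl hP.ne')).comp_hasFDerivAt x
    hprod).congr_fderiv (ext fun h => ?_)
  simp only [smul_apply, FunLike.coe_sum, Finset.sum_apply, proj_apply, smul_eq_mul,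
    mul_sum]
  refine sum_congr rfl fun i _ => ?_
  have hprod_erase : ∏ j ∈ univ.erase i, x j = (∏ j, x j) / x i := by
    rw [← prod_erase_mul _ _ (mem_univ i), mul_div_cancel_right₀ _ (hx i).ne']
  rw [hprod_erase, Real.rpow_sub_one hP.ne']
  field_simp

noncomputable def prodRoot (n : ℕ) (y : ι → ℝ) : ℝ := (∏ i, y i) ^ ((1 : ℝ) / n)

noncomputable def hjSolution (a : ℝ) (n : ℕ) (y : ι → ℝ) : ℝ :=
  a ^ ((1 : ℝ) / n) * n * prodRoot n y - a ^ ((1 : ℝ) / n) * n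

noncomputable def hjCorrector (a : ℝ) (n : ℕ) (p x₀ y : ι → ℝ) : ℝ :=
  (1 / 2) * a ^ (-((n : ℝ) - 1) / n) *
    ((∑ j, p j * y j) * (prodRoot n y - (prodRoot n y)⁻¹)
      - 2 * (∑ j, p j * x₀ j) * (prodRoot n y - 1))

variable {n : ℕ} {x : ι → ℝ}

theorem prodRoot_pos (hx : ∀ i, 0 < x i) : 0 < prodRoot n x :=
  Real.rpow_pos_of_pos (prod_pos fun i _ => hx i) _

theorem prodRoot_pow (hx : ∀ i, 0 < x i) (hn : n ≠ 0) : prodRoot n x ^ n = ∏ i, x i := by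
  rw [prodRoot, one_div, Real.rpow_inv_natCast_pow (prod_pos fun i _ => hx i).le hn]

theorem hasFDerivAt_prodRoot (hx : ∀ i, 0 < x i) :
    HasFDerivAt (prodRoot n)
      ((1 / n * prodRoot n x) • ∑ i, (x i)⁻¹ • proj (R := ℝ) (φ := fun _ : ι => ℝ) i) x :=
  hasFDerivAt_prod_rpow hx _

theorem fderiv_prodRoot_apply (hx : ∀ i, 0 < x i) (h : ι → ℝ) :
    fderiv ℝ (prodRoot n) x h = prodRoot n x / n * ∑ i, h i / x i := by
  rw [(hasFDerivAt_prodRoot hx).fderiv]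
  simp only [smul_apply, FunLike.coe_sum, Finset.sum_apply, proj_apply, smul_eq_mul,
    div_eq_inv_mul]
  ring

theorem fderiv_prodRoot_apply_single [DecidableEq ι] (hx : ∀ i, 0 < x i) (i : ι) :
    fderiv ℝ (prodRoot n) x (Pi.single i 1) = prodRoot n x / n / x i := by
  simp [fderiv_prodRoot_apply hx, Pi.single_apply, div_eq_mul_inv]

theorem fderiv_prodRoot_apply_self (hx : ∀ i, 0 < x i) (hn : n ≠ 0)
    (hcard : Fintype.card ι = n) : fderiv ℝ (prodRoot n) x x = prodRoot n x := by
  have hsum : ∑ i, x i / x i = n := by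
    simp [fun i => div_self (hx i).ne', hcard]
  rw [fderiv_prodRoot_apply hx, hsum]
  field_simp

theorem fderiv_hjSolution_apply_single [DecidableEq ι] (a : ℝ) (hn : n ≠ 0)
    (hx : ∀ i, 0 < x i) (i : ι) :
    fderiv ℝ (hjSolution a n) x (Pi.single i 1)
      = a ^ ((1 : ℝ) / n) * prodRoot n x / x i := by
  have hw : HasFDerivAt (hjSolution a n)
      ((a ^ ((1 : ℝ) / n) * n) • fderiv ℝ (prodRoot n) x) x :=
    ((hasFDerivAt_prodRoot hx).differentiableAt.hasFDerivAt.const_mul _).sub_const _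
  rw [hw.fderiv, smul_apply, fderiv_prodRoot_apply_single hx, smul_eq_mul]
  field_simp

theorem prod_fderiv_hjSolution_apply_single [DecidableEq ι] {a : ℝ} (ha : 0 ≤ a)
    (hn : n ≠ 0) (hcard : Fintype.card ι = n) (hx : ∀ i, 0 < x i) :
    ∏ i, fderiv ℝ (hjSolution a n) x (Pi.single i 1) = a := by
  simp_rw [fderiv_hjSolution_apply_single a hn hx]
  rw [prod_div_distrib, prod_const, card_univ, hcard, mul_pow, prodRoot_pow hx hn, one_div,
    Real.rpow_inv_natCast_pow ha hn, mul_div_cancel_right₀ _ (prod_pos fun i _ => hx i).ne']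

theorem prod_erase_fderiv_hjSolution_apply_single [DecidableEq ι] {a : ℝ} (ha : 0 < a)
    (hn : n ≠ 0) (hcard : Fintype.card ι = n) (hx : ∀ i, 0 < x i) (i : ι) :
    ∏ j ∈ univ.erase i, fderiv ℝ (hjSolution a n) x (Pi.single j 1)
      = a * x i / (a ^ ((1 : ℝ) / n) * prodRoot n x) := by
  have hA : 0 < a ^ ((1 : ℝ) / n) := Real.rpow_pos_of_pos ha _
  have hG := prodRoot_pos (n := n) hx
  have hxi := (hx i).ne'
  have hprod := prod_fderiv_hjSolution_apply_single ha.le hn hcard hx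
  rw [← prod_erase_mul _ _ (mem_univ i), fderiv_hjSolution_apply_single a hn hx] at hprod
  rw [eq_div_iff (by positivity)]
  calc _ = (∏ j ∈ univ.erase i, fderiv ℝ (hjSolution a n) x (Pi.single j 1))
        * (a ^ ((1 : ℝ) / n) * prodRoot n x / x i) * x i := by field_simp
    _ = a * x i := by rw [hprod]

theorem fderiv_hjCorrector_apply_self (a : ℝ) (p x₀ : ι → ℝ) (hn : n ≠ 0)
    (hcard : Fintype.card ι = n) (hx : ∀ i, 0 < x i) :
    fderiv ℝ (hjCorrector a n p x₀) x x
      = a ^ (-((n : ℝ) - 1) / n) * prodRoot n x * ∑ i, p i * (x i - x₀ i) := by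
  have hG := prodRoot_pos (n := n) hx
  have hg := (hasFDerivAt_prodRoot (n := n) hx).differentiableAt.hasFDerivAt
  have hℓ : HasFDerivAt (fun y : ι → ℝ => ∑ j, p j * y j)
      (∑ j, p j • proj (R := ℝ) (φ := fun _ : ι => ℝ) j) x :=
    HasFDerivAt.fun_sum fun j _ => (hasFDerivAt_apply j x).const_mul (p j)
  have hv : HasFDerivAt (hjCorrector a n p x₀) _ x :=
    ((hℓ.mul (hg.sub ((hasDerivAt_inv hG.ne').comp_hasFDerivAt x hg))).sub
      ((hg.sub_const 1).const_mul _)).const_mul _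
  rw [hv.fderiv]
  simp only [smul_apply, sub_apply, add_apply, FunLike.coe_sum, Finset.sum_apply, proj_apply,
    smul_eq_mul, Pi.sub_apply, Function.comp_apply, fderiv_prodRoot_apply_self hx hn hcard]
  simp only [mul_sub, sum_sub_distrib]
  field_simp
  ring

/-- The corrector `v` solves the linearization
`∑ i (∏_{j≠i} ∂_j w) ∂_i v = p ⋅ (x - x₀)` of the Hamilton–Jacobi equation
around the explicit solution `w(x) = a^{1/d} d (x₁⋯x_d)^{1/d} - a^{1/d} d`. -/
theorem corrector_solves_linearization (d : ℕ) (hd : 0 < d) (a : ℝ) (ha : 0 < a)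
    (p x0 x : Fin d → ℝ) (hx : ∀ i, 0 < x i) :
    let g : (Fin d → ℝ) → ℝ := fun y => (∏ j, y j) ^ ((1 : ℝ) / d)
    let w : (Fin d → ℝ) → ℝ := fun y => a ^ ((1 : ℝ) / d) * d * g y - a ^ ((1 : ℝ) / d) * d
    let v : (Fin d → ℝ) → ℝ := fun y =>
      (1 / 2) * a ^ (-((d : ℝ) - 1) / d) *
        ((∑ j, p j * y j) * (g y - (g y)⁻¹) - 2 * (∑ j, p j * x0 j) * (g y - 1))
    ∑ i, (∏ j ∈ Finset.univ.erase i, fderiv ℝ w x (Pi.single j 1)) *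
          fderiv ℝ v x (Pi.single i 1)
      = ∑ i, p i * (x i - x0 i) := by
  intro g w v
  show ∑ i, (∏ j ∈ univ.erase i, fderiv ℝ (hjSolution a d) x (Pi.single j 1)) *
      fderiv ℝ (hjCorrector a d p x0) x (Pi.single i 1) = _
  have hd0 : d ≠ 0 := hd.ne'
  have hcard : Fintype.card (Fin d) = d := Fintype.card_fin d
  have hG := prodRoot_pos (n := d) hx
  calc _ = a / (a ^ ((1 : ℝ) / d) * prodRoot d x) *
        ∑ i, x i * fderiv ℝ (hjCorrector a d p x0) x (Pi.single i 1) := by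
        rw [mul_sum]
        refine sum_congr rfl fun i _ => ?_
        rw [prod_erase_fderiv_hjSolution_apply_single ha hd0 hcard hx]
        ring
    _ = a / (a ^ ((1 : ℝ) / d) * prodRoot d x) * fderiv ℝ (hjCorrector a d p x0) x x := by
        rw [sum_mul_apply_single]
    _ = ∑ i, p i * (x i - x0 i) := by
        rw [fderiv_hjCorrector_apply_self a p x0 hd0 hcard hx,
          Real.rpow_neg_sub_one_div ha hd0]
        field_simp
end
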